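/- arXiv:1712.01820 — 9 statements merged into one kernel-verified Lean document; each statement's English description precedes it below -/
import Mathlib

section
/- Let U = (u_{ij})_{i,j∈{1,2,3}} be a 3×3 magic unitary over a unital C*-algebra A. Then all entries of U pairwise commute: u_{ij}·u_{kl} = u_{kl}·u_{ij} for all i, j, k, l ∈ {1,2,3}. -/
/-!
Entries in a common row or column of a magic unitary are orthogonal projections: in a
C⋆-algebra, projections summing to `1` are pairwise orthogonal. For `i ≠ k` and `j ≠ l` let
`m` be the third column. Expanding `u k l = 1 - u k j - u k m` shows `u i j * u k l * u i m = 0`,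
while `u k l * u i l = 0`; multiplying `u i j * u k l` on the right by `1 = u i j + u i l + u i m`
therefore gives `u i j * u k l = u i j * u k l * u i j`. The right-hand side is self-adjoint, so
taking adjoints yields `u i j * u k l = u k l * u i j`.
-/

open Finset

section

variable {A : Type*}

lemma Finset.sum_univ_eq_add_add_of_card_eq_three {ι M : Type*} [Fintype ι] [AddCommMonoid M]
    (hι : Fintype.card ι = 3) {a b c : ι} (hab : a ≠ b) (hac : a ≠ c) (hbc : b ≠ c)
    (f : ι → M) : ∑ x, f x = f a + f b + f c := by
  classical
  have huniv : ({a, b, c} : Finset ι) = univ :=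
    eq_univ_of_card _ (hι ▸ card_eq_three.mpr ⟨a, b, c, hab, hac, hbc, rfl⟩)
  rw [← huniv, sum_insert (by simp [hab, hac]), sum_pair hbc, add_assoc]

lemma IsSelfAdjoint.commute_of_mul_mul_self_eq [Semigroup A] [StarMul A] {p q : A}
    (hp : IsSelfAdjoint p) (hq : IsSelfAdjoint q) (h : p * q * p = p * q) : Commute p q := by
  have hstar : p * q * p = q * p := by
    simpa [star_mul, hp.star_eq, hq.star_eq, mul_assoc] using congr_arg star h
  exact h.symm.trans hstar

section CStarAlgebra

variable [CStarAlgebra A]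

lemma IsStarProjection.mul_eq_zero_of_add_le_one [PartialOrder A] [StarOrderedRing A] {p q : A}
    (hp : IsStarProjection p) (hq : IsStarProjection q) (h : p + q ≤ 1) : p * q = 0 := by
  have hq_le : q ≤ 1 - p := by rwa [le_sub_iff_add_le']
  have hq_mul : (1 - p) * q = q := (hq.le_iff_mul_eq_right hp.one_sub).mp hq_le
  rw [← hq_mul, ← mul_assoc, hp.mul_one_sub_self, zero_mul]

lemma IsStarProjection.mul_eq_zero_of_sum_eq_one {ι : Type*} [Fintype ι] {p : ι → A}
    (hp : ∀ i, IsStarProjection (p i)) (hsum : ∑ i, p i = 1) {i j : ι} (hij : i ≠ j) :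
    p i * p j = 0 := by
  classical
  let _ : PartialOrder A := CStarAlgebra.spectralOrder A
  have : StarOrderedRing A := CStarAlgebra.spectralOrderedRing A
  refine (hp i).mul_eq_zero_of_add_le_one (hp j) ?_
  rw [← hsum, ← sum_pair hij]
  exact sum_le_sum_of_subset_of_nonneg (subset_univ _) fun k _ _ ↦ (hp k).nonneg

end CStarAlgebra

structure IsMagicUnitary [NonAssocSemiring A] [Star A] {ι : Type*} [Fintype ι]
    (u : ι → ι → A) : Prop where
  isStarProjection : ∀ i j, IsStarProjection (u i j)
  sum_row : ∀ i, ∑ j, u i j = 1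
  sum_col : ∀ j, ∑ i, u i j = 1

namespace IsMagicUnitary

variable [CStarAlgebra A] {ι : Type*} [Fintype ι] {u : ι → ι → A}

lemma mul_eq_zero_of_row (hu : IsMagicUnitary u) (i : ι) {j l : ι} (hjl : j ≠ l) :
    u i j * u i l = 0 :=
  IsStarProjection.mul_eq_zero_of_sum_eq_one (hu.isStarProjection i) (hu.sum_row i) hjl

lemma mul_eq_zero_of_col (hu : IsMagicUnitary u) (j : ι) {i k : ι} (hik : i ≠ k) :
    u i j * u k j = 0 :=
  IsStarProjection.mul_eq_zero_of_sum_eq_one (hu.isStarProjection · j) (hu.sum_col j) hik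

lemma mul_mul_self_eq_of_card_eq_three (hu : IsMagicUnitary u) (hι : Fintype.card ι = 3)
    {i j k l : ι} (hik : i ≠ k) (hjl : j ≠ l) : u i j * u k l * u i j = u i j * u k l := by
  suffices h : ∀ x, x ≠ j → u i j * u k l * u i x = 0 by
    rw [← sum_eq_single j (fun x _ hx ↦ h x hx) (absurd (mem_univ j)), ← mul_sum, hu.sum_row, mul_one]
  intro m hmj
  rcases eq_or_ne m l with rfl | hml
  · rw [mul_assoc, hu.mul_eq_zero_of_col m hik.symm, mul_zero]
  · have hkl : u k l = 1 - u k j - u k m := by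
      rw [← hu.sum_row k, sum_univ_eq_add_add_of_card_eq_three hι hjl hmj.symm hml.symm]
      abel
    rw [hkl, mul_assoc, sub_mul, sub_mul, one_mul, hu.mul_eq_zero_of_col m hik.symm, sub_zero,
      mul_sub, hu.mul_eq_zero_of_row i hmj.symm, ← mul_assoc, hu.mul_eq_zero_of_col j hik,
      zero_mul, sub_zero]

lemma commute_of_card_eq_three (hu : IsMagicUnitary u) (hι : Fintype.card ι = 3)
    (i j k l : ι) : Commute (u i j) (u k l) := by
  rcases eq_or_ne i k with rfl | hik
  · rcases eq_or_ne j l with rfl | hjl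
    · exact Commute.refl _
    · exact (hu.mul_eq_zero_of_row i hjl).trans (hu.mul_eq_zero_of_row i hjl.symm).symm
  rcases eq_or_ne j l with rfl | hjl
  · exact (hu.mul_eq_zero_of_col j hik).trans (hu.mul_eq_zero_of_col j hik.symm).symm
  exact (hu.isStarProjection i j).isSelfAdjoint.commute_of_mul_mul_self_eq
    (hu.isStarProjection k l).isSelfAdjoint (hu.mul_mul_self_eq_of_card_eq_three hι hik hjl)

end IsMagicUnitary

end

/-- The entries of any `3 × 3` magic unitary over a unital C*-algebra
pairwise commute. -/
theorem magicUnitary_three_commutes {A : Type*} [CStarAlgebra A]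
    (u : Fin 3 → Fin 3 → A)
    (hstar : ∀ i j, star (u i j) = u i j)
    (hidem : ∀ i j, u i j * u i j = u i j)
    (hrow : ∀ i, ∑ j, u i j = 1)
    (hcol : ∀ j, ∑ i, u i j = 1) :
    ∀ i j k l, u i j * u k l = u k l * u i j := by
  have hu : IsMagicUnitary u :=
    ⟨fun i j ↦ ⟨hidem i j, hstar i j⟩, hrow, hcol⟩
  exact fun i j k l ↦ (hu.commute_of_card_eq_three (Fintype.card_fin 3) i j k l).eq
end

section
/- Let A be a unital C*-algebra, X a finite set, and U = (u_{xy})_{x,y∈X} a magic unitary over A. Suppose there exist: (i) a unital ℂ-algebra homomorphism ε : A → ℂ with ε(u_{xy}) = 1 if x = y and ε(u_{xy}) = 0 otherwise; (ii) an additive map S : A → A satisfying S(ab) = S(b)S(a) for all a, b ∈ A and S(u_{xy}) = u_{yx} for all x, y ∈ X; (iii) a unital ℂ-algebra homomorphism Δ : A → A ⊗_ℂ A with Δ(u_{xz}) = ∑_{w∈X} u_{xw} ⊗ u_{wz} for all x, z ∈ X. Then the relation ∼₂ on X × X defined by (x,x') ∼₂ (y,y') if and only if u_{xy}·u_{x'y'}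 ≠ 0 is an equivalence relation (reflexive, symmetric, and transitive). -/
/-!
Reflexivity comes from the counit, and symmetry from the antipode followed by the involution.
For transitivity, the projections in a row of `u` are pairwise orthogonal (a C⋆-fact), which
makes `u x y ⊗ u y z` absorb `Δ (u x z)` from either side. Hence `u x z * u x' z' = 0` forces
`(u x y * u x' y') ⊗ (u y z * u y' z') = 0`, and over a field a simple tensor vanishes only
when one of its factors does.
-/

open scoped TensorProduct

theorem TensorProduct.eq_zero_or_eq_zero_of_tmul_eq_zero {K M N : Type*} [Field K]
    [AddCommGroup M] [Module K M] [AddCommGroup N] [Module K N] {m : M} {n : N}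
    (h : m ⊗ₜ[K] n = 0) : m = 0 ∨ n = 0 := by
  refine or_iff_not_imp_left.mpr fun hm => ?_
  obtain ⟨f, hf⟩ : ∃ f : Module.Dual K M, f m ≠ 0 := by
    by_contra! hc
    exact hm ((Module.forall_dual_apply_eq_zero_iff K m).mp hc)
  have hfn : f m • n = 0 := by
    simpa using congrArg (fun t => TensorProduct.lid K N (LinearMap.rTensor N f t)) h
  exact (smul_eq_zero_iff_right hf).mp hfn

namespace IsStarProjection

theorem star_mul_mul_self {R : Type*} [Semiring R] [StarRing R] {p q : R}
    (hp : IsStarProjection p) (hq : IsStarProjection q) :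
    star (q * p) * (q * p) = p * q * p := by
  rw [star_mul, hp.isSelfAdjoint.star_eq, hq.isSelfAdjoint.star_eq, mul_assoc,
    ← mul_assoc q, hq.isIdempotentElem.eq, mul_assoc]

theorem mul_eq_zero_of_sum_eq_one_s3 {R ι : Type*} [NormedRing R] [StarRing R] [CStarRing R]
    [PartialOrder R] [StarOrderedRing R] [Fintype ι] {p : ι → R}
    (hp : ∀ i, IsStarProjection (p i)) (hsum : ∑ i, p i = 1) {i j : ι} (hij : i ≠ j) :
    p i * p j = 0 := by
  classical
  -- The terms `p j * p k * p j = star (p k * p j) * (p k * p j)` are nonnegative and the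
  -- one with `k = j` already accounts for the whole sum.
  have hsandwich : ∑ k, p j * p k * p j = p j * p j * p j := by
    rw [← Finset.sum_mul, ← Finset.mul_sum, hsum, mul_one, (hp j).isIdempotentElem.eq,
      (hp j).isIdempotentElem.eq]
  have hrest : ∑ k ∈ Finset.univ.erase j, p j * p k * p j = 0 := by
    rw [← Finset.add_sum_erase _ _ (Finset.mem_univ j)] at hsandwich
    exact add_eq_left.mp hsandwich
  have hterm : p j * p i * p j = 0 :=
    (Finset.sum_eq_zero_iff_of_nonneg (fun k _ => (hp j).star_mul_mul_self (hp k) ▸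
      star_mul_self_nonneg (p k * p j))).mp hrest i (by simpa using hij)
  exact CStarRing.star_mul_self_eq_zero_iff _ |>.mp ((hp j).star_mul_mul_self (hp i) ▸ hterm)

end IsStarProjection

section Comultiplication

variable {R A X : Type*} [CommSemiring R] [Semiring A] [Algebra R A] [Fintype X]
  {u : X → X → A} (hidem : ∀ x y, u x y * u x y = u x y)
  (horth : ∀ x {w y}, w ≠ y → u x w * u x y = 0)
  {Δ : A →ₐ[R] A ⊗[R] A} (hΔ : ∀ x z, Δ (u x z) = ∑ w, u x w ⊗ₜ[R] u w z)
include hidem horth hΔ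

theorem tmul_mul_comul_eq (x y z : X) :
    (u x y ⊗ₜ[R] u y z) * Δ (u x z) = u x y ⊗ₜ[R] u y z := by
  rw [hΔ, Finset.mul_sum, Finset.sum_eq_single y]
  · rw [Algebra.TensorProduct.tmul_mul_tmul, hidem, hidem]
  · intro w _ hw
    rw [Algebra.TensorProduct.tmul_mul_tmul, horth x (Ne.symm hw), TensorProduct.zero_tmul]
  · exact fun hy => absurd (Finset.mem_univ y) hy

theorem comul_mul_tmul_eq (x y z : X) :
    Δ (u x z) * (u x y ⊗ₜ[R] u y z) = u x y ⊗ₜ[R] u y z := by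
  rw [hΔ, Finset.sum_mul, Finset.sum_eq_single y]
  · rw [Algebra.TensorProduct.tmul_mul_tmul, hidem, hidem]
  · intro w _ hw
    rw [Algebra.TensorProduct.tmul_mul_tmul, horth x hw, TensorProduct.zero_tmul]
  · exact fun hy => absurd (Finset.mem_univ y) hy

theorem mul_tmul_mul_eq_zero {x x' y y' z z' : X} (h : u x z * u x' z' = 0) :
    (u x y * u x' y') ⊗ₜ[R] (u y z * u y' z') = 0 :=
  calc (u x y * u x' y') ⊗ₜ[R] (u y z * u y' z')
      = (u x y ⊗ₜ[R] u y z) * Δ (u x z) * (Δ (u x' z') * (u x' y' ⊗ₜ[R] u y' z')) := by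
        rw [tmul_mul_comul_eq hidem horth hΔ, comul_mul_tmul_eq hidem horth hΔ,
          Algebra.TensorProduct.tmul_mul_tmul]
    _ = (u x y ⊗ₜ[R] u y z) * Δ (u x z * u x' z') * (u x' y' ⊗ₜ[R] u y' z') := by
        rw [map_mul]; simp only [mul_assoc]
    _ = 0 := by rw [h, map_zero, mul_zero, zero_mul]

end Comultiplication

theorem mul_eq_zero_of_antipode {A X : Type*} [Semiring A] [StarRing A] {u : X → X → A}
    (hstar : ∀ x y, star (u x y) = u x y) (S : A →+ A) (hSmul : ∀ a b, S (a * b) = S b * S a)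
    (hSu : ∀ x y, S (u x y) = u y x) {x x' y y' : X} (h : u y x * u y' x' = 0) :
    u x y * u x' y' = 0 := by
  have hS : u x' y' * u x y = 0 := by simpa [hSmul, hSu] using congrArg S h
  simpa [hstar] using congrArg star hS

theorem mul_ne_zero_of_counit {A X : Type*} [Semiring A] [Algebra ℂ A] [DecidableEq X]
    {u : X → X → A} (ε : A →ₐ[ℂ] ℂ) (hε : ∀ x y, ε (u x y) = if x = y then 1 else 0)
    (x x' : X) : u x x * u x' x' ≠ 0 := fun h => by
  simpa [hε] using congrArg ε h

theorem orbital_relation_is_equivalence_general {A : Type*} [CStarAlgebra A] {X : Type*}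
    [Fintype X] [DecidableEq X] (u : X → X → A)
    (hstar : ∀ x y, star (u x y) = u x y)
    (hidem : ∀ x y, u x y * u x y = u x y)
    (hrow : ∀ x, ∑ y, u x y = 1)
    (ε : A →ₐ[ℂ] ℂ)
    (hε : ∀ x y, ε (u x y) = if x = y then 1 else 0)
    (S : A → A)
    (hSadd : ∀ a b, S (a + b) = S a + S b)
    (hSmul : ∀ a b, S (a * b) = S b * S a)
    (hSu : ∀ x y, S (u x y) = u y x)
    (Δ : A →ₐ[ℂ] A ⊗[ℂ] A)
    (hΔ : ∀ x z, Δ (u x z) = ∑ w, u x w ⊗ₜ[ℂ] u w z) :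
    Equivalence (fun p q : X × X => u p.1 q.1 * u p.2 q.2 ≠ 0) := by
  let _ := CStarAlgebra.spectralOrder A
  have _ := CStarAlgebra.spectralOrderedRing A
  have horth : ∀ x {w y}, w ≠ y → u x w * u x y = 0 := fun x _ _ hwy =>
    IsStarProjection.mul_eq_zero_of_sum_eq_one_s3 (fun y => ⟨hidem x y, hstar x y⟩) (hrow x) hwy
  refine ⟨fun p => mul_ne_zero_of_counit ε hε p.1 p.2, fun h hsymm => ?_, fun h₁ h₂ h => ?_⟩
  · exact h (mul_eq_zero_of_antipode hstar (AddMonoidHom.mk' S hSadd) hSmul hSu hsymm)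
  · exact (TensorProduct.eq_zero_or_eq_zero_of_tmul_eq_zero
      (mul_tmul_mul_eq_zero hidem horth hΔ h)).elim h₁ h₂

/-- Given a magic unitary `u` over a unital C*-algebra, together with a
counit `ε`, an antipode `S`, and a comultiplication `Δ` acting on the generators in the
standard way, the relation `(x,x') ∼₂ (y,y') ↔ u x y * u x' y' ≠ 0` on `X × X` is an
equivalence relation. -/
theorem orbital_relation_is_equivalence {A : Type*} [CStarAlgebra A] {X : Type*}
    [Fintype X] [DecidableEq X] (u : X → X → A)
    (hstar : ∀ x y, star (u x y) = u x y)
    (hidem : ∀ x y, u x y * u x y = u x y)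
    (hrow : ∀ x, ∑ y, u x y = 1)
    (hcol : ∀ x, ∑ y, u y x = 1)
    (ε : A →ₐ[ℂ] ℂ)
    (hε : ∀ x y, ε (u x y) = if x = y then 1 else 0)
    (S : A → A)
    (hSadd : ∀ a b, S (a + b) = S a + S b)
    (hSmul : ∀ a b, S (a * b) = S b * S a)
    (hSu : ∀ x y, S (u x y) = u y x)
    (Δ : A →ₐ[ℂ] A ⊗[ℂ] A)
    (hΔ : ∀ x z, Δ (u x z) = ∑ w, u x w ⊗ₜ[ℂ] u w z) :
    Equivalence (fun p q : X × X => u p.1 q.1 * u p.2 q.2 ≠ 0) :=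
  orbital_relation_is_equivalence_general u hstar hidem hrow ε hε S hSadd hSmul hSu Δ hΔ
end

section
/- Let A be a unital C*-algebra, X a finite set, U = (u_{xy})_{x,y∈X} a magic unitary over A, and f : X × X → ℂ. Then the following are equivalent: (i) ∑_{x,x'∈X} f(x,x')·u_{yx}·u_{y'x'} = f(y,y')·1 in A for all y, y' ∈ X; (ii) f(x,x') = f(y,y') whenever u_{yx}·u_{y'x'} ≠ 0. -/
/-!
Rows of a magic unitary are complete families of orthogonal projections: if `∑ₖ pₖ = 1` then
`∑ₖ (pₖ pⱼ)* (pₖ pⱼ) = pⱼ`, which forces `pₖ pⱼ = 0` for `k ≠ j` by positivity. Hence compressing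
`∑ f(x, x') u_{yx} u_{y'x'}` by `u_{yx}` on the left and `u_{y'x'}` on the right isolates the single
term `f(x, x') u_{yx} u_{y'x'}`, and comparing with the compression of `f(y, y')·1` gives (ii).
Conversely, under (ii) every nonzero term carries the coefficient `f(y, y')`, and the double sum
factors as `f(y, y') (∑ₓ u_{yx}) (∑ₓ' u_{y'x'}) = f(y, y')`.
-/

theorem CompleteOrthogonalIdempotents.of_isStarProjection {R ι : Type*} [NormedRing R]
    [StarRing R] [CStarRing R] [PartialOrder R] [StarOrderedRing R] [Fintype ι] {p : ι → R}
    (hp : ∀ i, IsStarProjection (p i)) (hsum : ∑ i, p i = 1) :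
    CompleteOrthogonalIdempotents p := by
  classical
  refine CompleteOrthogonalIdempotents.iff_ortho_complete.mpr ⟨fun i j hij => ?_, hsum⟩
  have hsq : ∀ k, star (p k * p j) * (p k * p j) = p j * p k * p j := fun k => by
    rw [star_mul, (hp j).isSelfAdjoint.star_eq, (hp k).isSelfAdjoint.star_eq,
      mul_assoc, ← mul_assoc (p k), (hp k).isIdempotentElem.eq, mul_assoc]
  have htotal : ∑ k, star (p k * p j) * (p k * p j) = p j := by
    simp only [hsq, ← Finset.sum_mul, ← Finset.mul_sum, hsum, mul_one,
      (hp j).isIdempotentElem.eq]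
  have hrest : ∑ k ∈ Finset.univ.erase j, star (p k * p j) * (p k * p j) = 0 := by
    rw [Finset.sum_erase_eq_sub (Finset.mem_univ j), htotal, hsq, mul_assoc,
      (hp j).isIdempotentElem.eq, (hp j).isIdempotentElem.eq, sub_self]
  have hzero := (Finset.sum_eq_zero_iff_of_nonneg fun k _ => star_mul_self_nonneg _).mp hrest i
    (Finset.mem_erase.mpr ⟨hij, Finset.mem_univ i⟩)
  exact (CStarRing.star_mul_self_eq_zero_iff _).mp hzero

theorem OrthogonalIdempotents.mul_sum_smul_mul_mul {S R ι κ : Type*} [Semiring S] [Semiring R]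
    [Module S R] [SMulCommClass S R R] [IsScalarTower S R R] [Fintype ι] [Fintype κ]
    {p : ι → R} {q : κ → R} (hp : OrthogonalIdempotents p) (hq : OrthogonalIdempotents q)
    (c : ι × κ → S) (i : ι) (j : κ) :
    p i * (∑ a, ∑ b, c (a, b) • (p a * q b)) * q j = c (i, j) • (p i * q j) := by
  classical
  simp only [Finset.mul_sum, Finset.sum_mul, mul_smul_comm, smul_mul_assoc, ← mul_assoc,
    hp.mul_eq]
  simp only [mul_assoc, hq.mul_eq]
  simp

theorem fixed_vector_iff_constant_on_orbitals_general {A : Type*} [CStarAlgebra A] {X : Type*}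
    [Fintype X] (u : X → X → A)
    (hstar : ∀ x y, star (u x y) = u x y)
    (hidem : ∀ x y, u x y * u x y = u x y)
    (hrow : ∀ x, ∑ y, u x y = 1)
    (f : X × X → ℂ) :
    (∀ y y', ∑ x, ∑ x', f (x, x') • (u y x * u y' x') = f (y, y') • (1 : A)) ↔
      (∀ x x' y y', u y x * u y' x' ≠ 0 → f (x, x') = f (y, y')) := by
  let := CStarAlgebra.spectralOrder A
  have := CStarAlgebra.spectralOrderedRing A
  have hortho (y : X) : OrthogonalIdempotents (u y) :=
    (CompleteOrthogonalIdempotents.of_isStarProjection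
      (fun x => ⟨hidem y x, hstar y x⟩) (hrow y)).toOrthogonalIdempotents
  constructor
  · intro hfix x x' y y' hne
    have hcompress := congrArg (u y x * · * u y' x') (hfix y y')
    simp only [(hortho y).mul_sum_smul_mul_mul (hortho y'), mul_smul_comm, smul_mul_assoc,
      mul_one] at hcompress
    exact smul_left_injective ℂ hne hcompress
  · intro hconst y y'
    have hterm (x x' : X) : f (x, x') • (u y x * u y' x') = f (y, y') • (u y x * u y' x') := by
      by_cases h : u y x * u y' x' = 0
      · simp [h]
      · rw [hconst x x' y y' h]
    simp only [hterm, ← Finset.smul_sum, ← Finset.sum_mul_sum, hrow, mul_one]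

/-- For a magic unitary `u` over a unital C*-algebra and `f : X × X → ℂ`,
`f` is a fixed vector of the tensor square of the universal action if and only if `f` is
constant on the orbitals (`f (x,x') = f (y,y')` whenever `u y x * u y' x' ≠ 0`). -/
theorem fixed_vector_iff_constant_on_orbitals {A : Type*} [CStarAlgebra A] {X : Type*}
    [Fintype X] [DecidableEq X] (u : X → X → A)
    (hstar : ∀ x y, star (u x y) = u x y)
    (hidem : ∀ x y, u x y * u x y = u x y)
    (hrow : ∀ x, ∑ y, u x y = 1)
    (hcol : ∀ x, ∑ y, u y x = 1)
    (f : X × X → ℂ) :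
    (∀ y y', ∑ x, ∑ x', f (x, x') • (u y x * u y' x') = f (y, y') • (1 : A)) ↔
      (∀ x x' y y', u y x * u y' x' ≠ 0 → f (x, x') = f (y, y')) :=
  fixed_vector_iff_constant_on_orbitals_general u hstar hidem hrow f
end

section
/- Let A be a unital C*-algebra, X a finite set, and U = (u_{xy})_{x,y∈X} a magic unitary over A. Define the relation ∼₂ on X × X by (x,x') ∼₂ (y,y') if and only if u_{xy}·u_{x'y'} ≠ 0, and assume ∼₂ is an equivalence relation. Let R_i, R_j, R_k be (not necessarily distinct) equivalence classes of ∼₂. Then for any (x,z), (x',z') ∈ R_k, the sets {y ∈ X : (x,y) ∈ R_i and (y,z) ∈ R_j} and {y' ∈ X : (x',y') ∈ R_i and (y',z') ∈ R_j} have the same cardinality. In other words, the equivalence classes of ∼₂ have well-defined intersection numbers, so they form a coherent configuration on X. -/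
/-! Let `S`, `S'` be the sets of intermediate points for `(x, z)` and `(x', z')`, and let
`c = u x x' * u z z'`, which is nonzero because `(x, z) ∼₂ (x', z')`. An entry of
`t y y' = u x x' * u y y' * u z z'` is nonzero only if `(x, y) ∼₂ (x', y')` and `(y, z) ∼₂ (y', z')`,
so by transitivity a row of `t` indexed by `S` vanishes off `S'`, and a column indexed by `S'`
vanishes off `S`. Summing `t` over `S × S'` by rows gives `#S • c`, since the rows of `u` sum to
one; by columns it gives `#S' • c`. As `A` is torsion-free, `#S = #S'`. -/

open Finset

theorem nsmul_left_injective_of_ne_zero {M : Type*} [AddCommGroup M] [IsAddTorsionFree M]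
    {a : M} (ha : a ≠ 0) : Function.Injective (· • a : ℕ → M) := by
  intro m n h
  have : (m : ℤ) = n := smul_left_injective ℤ ha (by simpa only [natCast_zsmul] using h)
  exact_mod_cast this

theorem Finset.card_nsmul_eq_card_nsmul_of_support_subset {α β M : Type*} [Fintype α]
    [Fintype β] [AddCommMonoid M] {s : Finset α} {s' : Finset β} (t : α → β → M) (c : M)
    (hrow : ∀ a, ∑ b, t a b = c) (hcol : ∀ b, ∑ a, t a b = c)
    (hs : ∀ a ∈ s, ∀ b, t a b ≠ 0 → b ∈ s') (hs' : ∀ b ∈ s', ∀ a, t a b ≠ 0 → a ∈ s) :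
    #s • c = #s' • c := by
  have hrow' : ∀ a ∈ s, ∑ b ∈ s', t a b = c := fun a ha => by
    rw [← hrow a]
    exact sum_subset (subset_univ _) fun b _ hb => not_not.mp (mt (hs a ha b) hb)
  have hcol' : ∀ b ∈ s', ∑ a ∈ s, t a b = c := fun b hb => by
    rw [← hcol b]
    exact sum_subset (subset_univ _) fun a _ ha => not_not.mp (mt (hs' b hb a) ha)
  calc #s • c = ∑ a ∈ s, ∑ b ∈ s', t a b := by rw [sum_congr rfl hrow', sum_const]
    _ = ∑ b ∈ s', ∑ a ∈ s, t a b := sum_comm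
    _ = #s' • c := by rw [sum_congr rfl hcol', sum_const]

section MagicUnitary

variable {R X : Type*} [Ring R] (u : X → X → R)

/-- The paper's `∼₂`. -/
def orbitalRel (p q : X × X) : Prop := u p.1 q.1 * u p.2 q.2 ≠ 0

theorem sum_mul_entry_mul_of_row_sum [Fintype X] (hrow : ∀ x, ∑ y, u x y = 1) (a b : R) (y : X) :
    ∑ y', a * u y y' * b = a * b := by
  rw [← sum_mul, ← mul_sum, hrow, mul_one]

theorem sum_mul_entry_mul_of_col_sum [Fintype X] (hcol : ∀ x, ∑ y, u y x = 1) (a b : R) (y' : X) :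
    ∑ y, a * u y y' * b = a * b := by
  rw [← sum_mul, ← mul_sum, hcol, mul_one]

variable {u}

theorem orbitalRel_of_mul_entry_mul_ne_zero {x x' y y' z z' : X}
    (h : u x x' * u y y' * u z z' ≠ 0) :
    orbitalRel u (x, y) (x', y') ∧ orbitalRel u (y, z) (y', z') :=
  ⟨left_ne_zero_of_mul h, right_ne_zero_of_mul (by rwa [mul_assoc] at h)⟩

theorem ncard_orbitalRel_paths_eq [Fintype X] [IsAddTorsionFree R] (hrow : ∀ x, ∑ y, u x y = 1)
    (hcol : ∀ x, ∑ y, u y x = 1) (hEquiv : Equivalence (orbitalRel u)) (pi pj : X × X)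
    {x z x' z' : X} (hxz : orbitalRel u (x, z) (x', z')) :
    {y | orbitalRel u pi (x, y) ∧ orbitalRel u pj (y, z)}.ncard =
      {y' | orbitalRel u pi (x', y') ∧ orbitalRel u pj (y', z')}.ncard := by
  classical
  rw [Set.ncard_eq_toFinset_card', Set.ncard_eq_toFinset_card']
  refine nsmul_left_injective_of_ne_zero hxz <|
    card_nsmul_eq_card_nsmul_of_support_subset (fun y y' => u x x' * u y y' * u z z') _
      (sum_mul_entry_mul_of_row_sum u hrow _ _) (sum_mul_entry_mul_of_col_sum u hcol _ _)
      ?_ ?_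
  · intro y hy y' ht
    rw [Set.mem_toFinset] at hy ⊢
    obtain ⟨hxy, hyz⟩ := orbitalRel_of_mul_entry_mul_ne_zero ht
    exact ⟨hEquiv.trans hy.1 hxy, hEquiv.trans hy.2 hyz⟩
  · intro y' hy' y ht
    rw [Set.mem_toFinset] at hy' ⊢
    obtain ⟨hxy, hyz⟩ := orbitalRel_of_mul_entry_mul_ne_zero ht
    exact ⟨hEquiv.trans hy'.1 (hEquiv.symm hxy), hEquiv.trans hy'.2 (hEquiv.symm hyz)⟩

end MagicUnitary

theorem orbitals_form_coherent_configuration_general {A : Type*} [CStarAlgebra A] {X : Type*}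
    [Fintype X] (u : X → X → A)
    (hrow : ∀ x, ∑ y, u x y = 1)
    (hcol : ∀ x, ∑ y, u y x = 1)
    (hEquiv : Equivalence (fun p q : X × X => u p.1 q.1 * u p.2 q.2 ≠ 0))
    (pi pj pk : X × X) (x z x' z' : X)
    (hxz : u pk.1 x * u pk.2 z ≠ 0)
    (hxz' : u pk.1 x' * u pk.2 z' ≠ 0) :
    {y : X | u pi.1 x * u pi.2 y ≠ 0 ∧ u pj.1 y * u pj.2 z ≠ 0}.ncard =
      {y' : X | u pi.1 x' * u pi.2 y' ≠ 0 ∧ u pj.1 y' * u pj.2 z' ≠ 0}.ncard := by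
  have : IsAddTorsionFree A := .of_isTorsionFree ℂ A
  exact ncard_orbitalRel_paths_eq hrow hcol hEquiv pi pj (hEquiv.trans (hEquiv.symm hxz) hxz')

/-- Assume the orbital relation `∼₂` of a magic unitary is an equivalence
relation, and let `R i = {q | (x,x') ∼₂ q}` etc. be equivalence classes (given by
representatives `pi`, `pj`, `pk`). Then the intersection numbers are well defined: for any
two pairs `(x,z)`, `(x',z')` in the class of `pk`, the number of `y` with `(x,y)` in the
class of `pi` and `(y,z)` in the class of `pj` equals the corresponding number for
`(x',z')`. Hence the orbitals form a coherent configuration. -/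
theorem orbitals_form_coherent_configuration {A : Type*} [CStarAlgebra A] {X : Type*}
    [Fintype X] [DecidableEq X] (u : X → X → A)
    (hstar : ∀ x y, star (u x y) = u x y)
    (hidem : ∀ x y, u x y * u x y = u x y)
    (hrow : ∀ x, ∑ y, u x y = 1)
    (hcol : ∀ x, ∑ y, u y x = 1)
    (hEquiv : Equivalence (fun p q : X × X => u p.1 q.1 * u p.2 q.2 ≠ 0))
    (pi pj pk : X × X) (x z x' z' : X)
    (hxz : u pk.1 x * u pk.2 z ≠ 0)
    (hxz' : u pk.1 x' * u pk.2 z' ≠ 0) :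
    {y : X | u pi.1 x * u pi.2 y ≠ 0 ∧ u pj.1 y * u pj.2 z ≠ 0}.ncard =
      {y' : X | u pi.1 x' * u pi.2 y' ≠ 0 ∧ u pj.1 y' * u pj.2 z' ≠ 0}.ncard :=
  orbitals_form_coherent_configuration_general u hrow hcol hEquiv pi pj pk x z x' z' hxz hxz'
end

section
/- Let A be a unital C*-algebra, X a finite set, and U = (u_{xy})_{x,y∈X} a magic unitary over A. Then the commutant C = {M : complex X × X matrix with MU = UM} is a coherent algebra: it is a linear subspace of the complex X × X matrices that contains the identity matrix I and the all-ones matrix J, and is closed under matrix multiplication, under conjugate transposition, and under Schur (entrywise) product. -/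
/-!
The commutant is the preimage of the centralizer of `U` under the entrywise map
`algebraMap ℂ A`, hence a unital subalgebra. In a C⋆-algebra, projections summing to `1` are
pairwise orthogonal, so the entries of each row and of each column of `U` are orthogonal
projections. Multiplying `MU = UM` at `(x, z)` by `u x w` on the left and `u y z` on the right
then shows that `M` commutes with `U` iff `M x y • u x w u y z = M w z • u x w u y z` for all
`x w y z`. These relations are preserved by entrywise products, and, since taking adjoints
swaps the two projections, by conjugate transposition.
-/

open Finset
open scoped Matrix

structure IsMagicUnitary_s8 {A X : Type*} [Semiring A] [Star A] [Fintype X] (u : X → X → A) :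
    Prop where
  isStarProjection : ∀ x y, IsStarProjection (u x y)
  sum_row : ∀ x, ∑ y, u x y = 1
  sum_col : ∀ y, ∑ x, u x y = 1

theorem IsStarProjection.pairwise_mul_eq_zero_of_sum_eq_one {A ι : Type*} [CStarAlgebra A]
    [Fintype ι] {p : ι → A} (hp : ∀ i, IsStarProjection (p i)) (hsum : ∑ i, p i = 1) :
    Pairwise fun i j => p i * p j = 0 := by
  classical
  let _ := CStarAlgebra.spectralOrder A
  have _ := CStarAlgebra.spectralOrderedRing A
  intro j i hji
  have hsq : ∀ k, star (p k * p i) * (p k * p i) = p i * p k * p i := fun k => by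
    rw [star_mul, (hp i).isSelfAdjoint.star_eq, (hp k).isSelfAdjoint.star_eq, ← mul_assoc,
      mul_assoc (p i), (hp k).isIdempotentElem.eq]
  -- `∑_{k ≠ i} p i * p k * p i = p i * (1 - p i) * p i = 0` is a sum of positive elements.
  have hzero : ∑ k ∈ univ.erase i, star (p k * p i) * (p k * p i) = 0 := by
    rw [sum_congr rfl fun k _ => hsq k, ← sum_mul, ← mul_sum, sum_erase_eq_sub (mem_univ i),
      hsum, (hp i).mul_one_sub_self, zero_mul]
  have hji_zero := (sum_eq_zero_iff_of_nonneg fun k _ => star_mul_self_nonneg (p k * p i)).mp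
    hzero j (mem_erase.mpr ⟨hji, mem_univ j⟩)
  exact (CStarRing.star_mul_self_eq_zero_iff _).mp hji_zero

section OrthogonalIdempotents

variable {R A ι : Type*} [CommSemiring R] [Semiring A] [Algebra R A] [Fintype ι] {p : ι → A}

theorem mul_sum_smul_of_orthogonal (hp : ∀ i, IsIdempotentElem (p i))
    (horth : Pairwise fun i j => p i * p j = 0) (c : ι → R) (i : ι) :
    p i * ∑ j, c j • p j = c i • p i := by
  rw [mul_sum, sum_eq_single i (fun j _ hji => by rw [mul_smul_comm, horth hji.symm, smul_zero])
    (by simp), mul_smul_comm, (hp i).eq]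

theorem sum_smul_mul_of_orthogonal (hp : ∀ i, IsIdempotentElem (p i))
    (horth : Pairwise fun i j => p i * p j = 0) (c : ι → R) (i : ι) :
    (∑ j, c j • p j) * p i = c i • p i := by
  rw [sum_mul, sum_eq_single i (fun j _ hji => by rw [smul_mul_assoc, horth hji, smul_zero])
    (by simp), smul_mul_assoc, (hp i).eq]

end OrthogonalIdempotents

section Commutant

variable {R A X : Type*} [CommSemiring R] [Semiring A] [Algebra R A] [Fintype X] [DecidableEq X]

variable (R) in
/-- The matrices `M` over `R` with `M U = U M`, where `M` acts on `U = (u x y)` through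
`algebraMap R A`. -/
def scalarCommutant (u : X → X → A) : Subalgebra R (Matrix X X R) :=
  (Subalgebra.centralizer R {Matrix.of u}).comap (Algebra.ofId R A).mapMatrix

theorem mem_scalarCommutant {u : X → X → A} {M : Matrix X X R} :
    M ∈ scalarCommutant R u ↔ ∀ x z, ∑ y, M x y • u y z = ∑ y, M y z • u x y := by
  rw [scalarCommutant, Subalgebra.mem_comap, Subalgebra.mem_centralizer_iff]
  simp only [Set.mem_singleton_iff, forall_eq]
  rw [eq_comm, ← Matrix.ext_iff]
  simp only [Matrix.mul_apply, AlgHom.mapMatrix_apply, Matrix.map_apply, Matrix.of_apply,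
    Algebra.ofId_apply, Algebra.smul_def, Algebra.commutes]

theorem IsMagicUnitary_s8.allOnes_mem_scalarCommutant [Star A] {u : X → X → A}
    (hu : IsMagicUnitary_s8 u) : Matrix.of (fun _ _ => (1 : R)) ∈ scalarCommutant R u :=
  mem_scalarCommutant.mpr fun x z => by
    simp only [Matrix.of_apply, one_smul, hu.sum_row, hu.sum_col]

end Commutant

namespace IsMagicUnitary_s8

variable {A X : Type*} [CStarAlgebra A] [Fintype X] {u : X → X → A}

theorem pairwise_mul_eq_zero_row (hu : IsMagicUnitary_s8 u) (x : X) :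
    Pairwise fun y z => u x y * u x z = 0 :=
  IsStarProjection.pairwise_mul_eq_zero_of_sum_eq_one (hu.isStarProjection x) (hu.sum_row x)

theorem pairwise_mul_eq_zero_col (hu : IsMagicUnitary_s8 u) (y : X) :
    Pairwise fun x z => u x y * u z y = 0 :=
  IsStarProjection.pairwise_mul_eq_zero_of_sum_eq_one (fun x => hu.isStarProjection x y)
    (hu.sum_col y)

variable [DecidableEq X]

theorem mem_scalarCommutant_iff (hu : IsMagicUnitary_s8 u) {M : Matrix X X ℂ} :
    M ∈ scalarCommutant ℂ u ↔
      ∀ x w y z, M x y • (u x w * u y z) = M w z • (u x w * u y z) := by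
  rw [mem_scalarCommutant]
  constructor
  · intro hM x w y z
    have h := congrArg (u x w * · * u y z) (hM x z)
    rwa [mul_assoc, sum_smul_mul_of_orthogonal (fun b => (hu.isStarProjection b z).isIdempotentElem)
      (hu.pairwise_mul_eq_zero_col z), mul_sum_smul_of_orthogonal
      (fun b => (hu.isStarProjection x b).isIdempotentElem) (hu.pairwise_mul_eq_zero_row x),
      mul_smul_comm, smul_mul_assoc] at h
  · intro hM x z
    calc ∑ y, M x y • u y z
        = ∑ y, ∑ w, M x y • (u x w * u y z) := by
          simp_rw [← smul_sum, ← sum_mul, hu.sum_row, one_mul]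
      _ = ∑ y, ∑ w, M w z • (u x w * u y z) := by simp_rw [hM x]
      _ = ∑ w, M w z • u x w := by
          rw [sum_comm]
          simp_rw [← smul_sum, ← mul_sum, hu.sum_col, mul_one]

theorem conjTranspose_mem_scalarCommutant (hu : IsMagicUnitary_s8 u) {M : Matrix X X ℂ}
    (hM : M ∈ scalarCommutant ℂ u) : Mᴴ ∈ scalarCommutant ℂ u := by
  rw [hu.mem_scalarCommutant_iff] at hM ⊢
  intro x w y z
  simpa only [star_smul, star_mul, (hu.isStarProjection _ _).isSelfAdjoint.star_eq,
    Matrix.conjTranspose_apply] using congrArg star (hM y z x w)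

theorem hadamard_mem_scalarCommutant (hu : IsMagicUnitary_s8 u) {M N : Matrix X X ℂ}
    (hM : M ∈ scalarCommutant ℂ u) (hN : N ∈ scalarCommutant ℂ u) :
    M ⊙ N ∈ scalarCommutant ℂ u := by
  rw [hu.mem_scalarCommutant_iff] at hM hN ⊢
  intro x w y z
  rw [Matrix.hadamard_apply, Matrix.hadamard_apply, mul_smul, hN, smul_comm, hM, smul_comm,
    mul_smul]

end IsMagicUnitary_s8

/-- The commutant of a magic unitary, i.e. the set of complex matrices `M`
with `MU = UM` (entrywise, `∑ y, M x y • u y z = ∑ y, M y z • u x y`), is a coherent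
algebra: it is a linear subspace containing the identity and all-ones matrices, closed
under matrix multiplication, conjugate transposition, and Schur (entrywise) product. -/
theorem commutant_is_coherent_algebra {A : Type*} [CStarAlgebra A] {X : Type*}
    [Fintype X] [DecidableEq X] (u : X → X → A)
    (hstar : ∀ x y, star (u x y) = u x y)
    (hidem : ∀ x y, u x y * u x y = u x y)
    (hrow : ∀ x, ∑ y, u x y = 1)
    (hcol : ∀ x, ∑ y, u y x = 1) :
    ∃ C : Submodule ℂ (Matrix X X ℂ),
      (∀ M : Matrix X X ℂ,
          M ∈ C ↔ ∀ x z, ∑ y, M x y • u y z = ∑ y, M y z • u x y) ∧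
      (1 : Matrix X X ℂ) ∈ C ∧
      (Matrix.of fun _ _ => (1 : ℂ)) ∈ C ∧
      (∀ M N, M ∈ C → N ∈ C → M * N ∈ C) ∧
      (∀ M, M ∈ C → M.conjTranspose ∈ C) ∧
      (∀ M N, M ∈ C → N ∈ C → (Matrix.of fun x y => M x y * N x y) ∈ C) := by
  have hu : IsMagicUnitary_s8 u := ⟨fun x y => ⟨hidem x y, hstar x y⟩, hrow, hcol⟩
  exact ⟨Subalgebra.toSubmodule (scalarCommutant ℂ u), fun _ => mem_scalarCommutant,
    Subalgebra.one_mem _, hu.allOnes_mem_scalarCommutant, fun _ _ => Subalgebra.mul_mem _,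
    fun _ => hu.conjTranspose_mem_scalarCommutant, fun _ _ => hu.hadamard_mem_scalarCommutant⟩
end

section
/- Let A be a unital C*-algebra, X a finite set, and U = (u_{xy})_{x,y∈X} a magic unitary over A. Suppose there is a unital ℂ-algebra homomorphism Δ : A → A ⊗_ℂ A with Δ(u_{xz}) = ∑_{w∈X} u_{xw} ⊗ u_{wz} for all x, z ∈ X, and a ℂ-linear functional h : A → ℂ with h(1) = 1 satisfying the invariance condition (h ⊗ id)(Δ(a)) = h(a)·1 for all a ∈ A, where h ⊗ id : A ⊗_ℂ A → A is the linear map determined by a ⊗ b ↦ h(a)·b. Define (x,x') ∼₂ (y,y') if and only if u_{xy}·u_{x'y'} ≠ 0, and assume ∼₂ is an equivalence relation on X × X. Then: if (x,x') and (y,y') lie in a common equivalence class R of ∼₂, then h(u_{xy}·u_{x'y'}) = 1/|R|; and if (x,x') and (y,y') are not ∼₂-equivalent, then h(u_{xy}·u_{x'y'}) = 0. -/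
/-!
Applying the invariance of `h` to `u x z * u x' z'` gives
`∑ w v, h (u x w * u x' v) • (u w z * u v z') = h (u x z * u x' z') • 1`. The entries of a column
of a magic unitary are mutually orthogonal projections, so multiplying on the left by `u a z` and
on the right by `u b z'` isolates `h (u x a * u x' b) • (u a z * u b z')`. Hence
`h (u x a * u x' b) = h (u x z * u x' z')` whenever `u a z * u b z' ≠ 0`, i.e. the function
`q ↦ h (u x q.1 * u x' q.2)` is constant on the orbital of `(x, x')`. It vanishes off the orbital
and, by the row relations, sums to `h 1 = 1`.
-/

open scoped TensorProduct

theorem mul_eq_zero_of_sum_isStarProjection_eq_one {A ι : Type*} [CStarAlgebra A] [Fintype ι]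
    {p : ι → A} (hp : ∀ i, IsStarProjection (p i)) (hsum : ∑ i, p i = 1) {i j : ι}
    (hij : i ≠ j) : p i * p j = 0 := by
  classical
  -- positivity of `star x * x` needs the spectral order, which is not a global instance
  let _ := CStarAlgebra.spectralOrder A
  have _ := CStarAlgebra.spectralOrderedRing A
  have hterm : ∀ k, p j * p k * p j = star (p k * p j) * (p k * p j) := fun k => by
    rw [star_mul, (hp j).isSelfAdjoint.star_eq, (hp k).isSelfAdjoint.star_eq]
    conv_lhs => rw [← (hp k).isIdempotentElem.eq]
    simp only [mul_assoc]
  have hexpand : ∑ k, p j * p k * p j = p j := by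
    rw [← Finset.sum_mul, ← Finset.mul_sum, hsum, mul_one, (hp j).isIdempotentElem.eq]
  -- the `k = j` term of `hexpand` is already `p j`, so the others sum to zero
  have hrest : ∑ k ∈ Finset.univ.erase j, star (p k * p j) * (p k * p j) = 0 := by
    rw [← Finset.add_sum_erase _ _ (Finset.mem_univ j), (hp j).isIdempotentElem.eq,
      (hp j).isIdempotentElem.eq, add_eq_left] at hexpand
    simpa only [hterm] using hexpand
  have hi := (Finset.sum_eq_zero_iff_of_nonneg fun k _ => star_mul_self_nonneg (p k * p j)).mp
    hrest i (Finset.mem_erase.mpr ⟨hij, Finset.mem_univ i⟩)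
  exact (CStarRing.star_mul_self_eq_zero_iff _).mp hi

theorem mul_sum_sum_smul_mul_mul {R A ι κ : Type*} [CommSemiring R] [Semiring A] [Algebra R A]
    [Fintype ι] [Fintype κ] {p : ι → A} {q : κ → A} (c : ι → κ → R) {a : ι} {b : κ}
    (hpa : ∀ w, w ≠ a → p a * p w = 0) (hqb : ∀ v, v ≠ b → q v * q b = 0)
    (hpa' : p a * p a = p a) (hqb' : q b * q b = q b) :
    p a * (∑ w, ∑ v, c w v • (p w * q v)) * q b = c a b • (p a * q b) := by
  have hterm : ∀ w v, p a * (c w v • (p w * q v)) * q b = c w v • ((p a * p w) * (q v * q b)) :=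
    fun w v => by rw [mul_smul_comm, smul_mul_assoc, mul_assoc, mul_assoc, mul_assoc]
  simp only [Finset.mul_sum, Finset.sum_mul, hterm]
  rw [Fintype.sum_eq_single a fun w hw => by simp [hpa w hw],
    Fintype.sum_eq_single b fun v hv => by simp [hqb v hv], hpa', hqb']

theorem sum_sum_smul_mul_eq_smul_one {R A X : Type*} [CommSemiring R] [Semiring A] [Algebra R A]
    [Fintype X] {u : X → X → A} {Δ : A →ₐ[R] A ⊗[R] A}
    (hΔ : ∀ x z, Δ (u x z) = ∑ w, u x w ⊗ₜ[R] u w z) {h : A →ₗ[R] R}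
    (hinv : ∀ a : A, (TensorProduct.lid R A) ((LinearMap.rTensor A h) (Δ a)) = h a • (1 : A))
    (x x' z z' : X) :
    ∑ w, ∑ v, h (u x w * u x' v) • (u w z * u v z') = h (u x z * u x' z') • (1 : A) := by
  have hΔpair : Δ (u x z * u x' z') = ∑ w, ∑ v, (u x w * u x' v) ⊗ₜ[R] (u w z * u v z') := by
    simp only [map_mul, hΔ, Finset.sum_mul_sum, Algebra.TensorProduct.tmul_mul_tmul]
  simpa only [hΔpair, map_sum, LinearMap.rTensor_tmul, TensorProduct.lid_tmul] using
    hinv (u x z * u x' z')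

theorem eq_one_div_ncard_of_sum_eq_one {K α : Type*} [DivisionRing K] [Fintype α] {f : α → K}
    {P : α → Prop} {c : K} (hsum : ∑ a, f a = 1) (hzero : ∀ a, ¬ P a → f a = 0)
    (hconst : ∀ a, P a → f a = c) : c = 1 / ({a | P a}.ncard : K) := by
  classical
  have hcard : ({a | P a}.ncard : K) * c = 1 := by
    rw [← hsum, ← Finset.sum_filter_add_sum_filter_not Finset.univ P,
      Finset.sum_eq_zero fun a ha => hzero a (Finset.mem_filter.mp ha).2, add_zero,
      Finset.sum_congr rfl fun a ha => hconst a (Finset.mem_filter.mp ha).2, Finset.sum_const,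
      nsmul_eq_mul, ← Set.ncard_coe_finset, Finset.coe_filter_univ]
  exact eq_one_div_of_mul_eq_one_right hcard

theorem haar_pair_eq_of_mul_ne_zero {A X : Type*} [CStarAlgebra A] [Fintype X]
    {u : X → X → A} (hu : ∀ x y, IsStarProjection (u x y)) (hcol : ∀ y, ∑ x, u x y = 1)
    {Δ : A →ₐ[ℂ] A ⊗[ℂ] A} (hΔ : ∀ x z, Δ (u x z) = ∑ w, u x w ⊗ₜ[ℂ] u w z) {h : A →ₗ[ℂ] ℂ}
    (hinv : ∀ a : A, (TensorProduct.lid ℂ A) ((LinearMap.rTensor A h) (Δ a)) = h a • (1 : A))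
    (x x' : X) {a b z z' : X} (hab : u a z * u b z' ≠ 0) :
    h (u x a * u x' b) = h (u x z * u x' z') := by
  have horth : ∀ y {w w'}, w ≠ w' → u w y * u w' y = 0 := fun y =>
    mul_eq_zero_of_sum_isStarProjection_eq_one (fun w => hu w y) (hcol y)
  have hsandwich := mul_sum_sum_smul_mul_mul (p := fun w => u w z) (q := fun v => u v z')
    (fun w v => h (u x w * u x' v)) (fun w hw => horth z hw.symm) (fun v hv => horth z' hv)
    (hu a z).isIdempotentElem.eq (hu b z').isIdempotentElem.eq
  rw [sum_sum_smul_mul_eq_smul_one hΔ hinv, mul_smul_comm, smul_mul_assoc, mul_one] at hsandwich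
  exact smul_left_injective ℂ hab hsandwich.symm

theorem haar_state_on_pairs_general {A : Type*} [CStarAlgebra A] {X : Type*}
    [Fintype X] (u : X → X → A)
    (hstar : ∀ x y, star (u x y) = u x y)
    (hidem : ∀ x y, u x y * u x y = u x y)
    (hrow : ∀ x, ∑ y, u x y = 1)
    (hcol : ∀ x, ∑ y, u y x = 1)
    (Δ : A →ₐ[ℂ] A ⊗[ℂ] A)
    (hΔ : ∀ x z, Δ (u x z) = ∑ w, u x w ⊗ₜ[ℂ] u w z)
    (h : A →ₗ[ℂ] ℂ) (hone : h 1 = 1)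
    (hinv : ∀ a : A,
      (TensorProduct.lid ℂ A) ((LinearMap.rTensor A h) (Δ a)) = h a • (1 : A))
    (hEquiv : Equivalence (fun p q : X × X => u p.1 q.1 * u p.2 q.2 ≠ 0)) :
    ∀ x x' y y' : X,
      (u x y * u x' y' ≠ 0 →
        h (u x y * u x' y') =
          1 / ({q : X × X | u x q.1 * u x' q.2 ≠ 0}.ncard : ℂ)) ∧
      (u x y * u x' y' = 0 → h (u x y * u x' y') = 0) := by
  have hu : ∀ x y, IsStarProjection (u x y) := fun x y => ⟨hidem x y, hstar x y⟩
  intro x x' y y'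
  refine ⟨fun hne => ?_, fun h0 => by rw [h0, map_zero]⟩
  have hsum : ∑ q : X × X, h (u x q.1 * u x' q.2) = 1 := by
    rw [← map_sum, Fintype.sum_prod_type, ← Finset.sum_mul_sum, hrow, hrow, one_mul, hone]
  refine eq_one_div_ncard_of_sum_eq_one hsum (fun q hq => by rw [not_not.mp hq, map_zero])
    fun q hq => ?_
  have hqy : u q.1 y * u q.2 y' ≠ 0 :=
    hEquiv.trans (y := (x, x')) (z := (y, y')) (hEquiv.symm hq) hne
  exact haar_pair_eq_of_mul_ne_zero hu hcol hΔ hinv x x' hqy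

/-- Let `u` be a magic unitary over a unital C*-algebra, `Δ` a
comultiplication, and `h` an invariant state (Haar state): `(h ⊗ id)(Δ a) = h a • 1`.
If the orbital relation `∼₂` is an equivalence relation, then
`h (u x y * u x' y') = 1 / |R|` when `(x,x')` and `(y,y')` lie in a common class `R`,
and `h (u x y * u x' y') = 0` otherwise. -/
theorem haar_state_on_pairs {A : Type*} [CStarAlgebra A] {X : Type*}
    [Fintype X] [DecidableEq X] (u : X → X → A)
    (hstar : ∀ x y, star (u x y) = u x y)
    (hidem : ∀ x y, u x y * u x y = u x y)
    (hrow : ∀ x, ∑ y, u x y = 1)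
    (hcol : ∀ x, ∑ y, u y x = 1)
    (Δ : A →ₐ[ℂ] A ⊗[ℂ] A)
    (hΔ : ∀ x z, Δ (u x z) = ∑ w, u x w ⊗ₜ[ℂ] u w z)
    (h : A →ₗ[ℂ] ℂ) (hone : h 1 = 1)
    (hinv : ∀ a : A,
      (TensorProduct.lid ℂ A) ((LinearMap.rTensor A h) (Δ a)) = h a • (1 : A))
    (hEquiv : Equivalence (fun p q : X × X => u p.1 q.1 * u p.2 q.2 ≠ 0)) :
    ∀ x x' y y' : X,
      (u x y * u x' y' ≠ 0 →
        h (u x y * u x' y') =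
          1 / ({q : X × X | u x q.1 * u x' q.2 ≠ 0}.ncard : ℂ)) ∧
      (u x y * u x' y' = 0 → h (u x y * u x' y') = 0) :=
  haar_state_on_pairs_general u hstar hidem hrow hcol Δ hΔ h hone hinv hEquiv
end

section
/- Let X, Y, Z be finite simple graphs and A a unital C*-algebra. Let U = (u_{xy})_{x∈V(X), y∈V(Y)} and V = (v_{yz})_{y∈V(Y), z∈V(Z)} be magic unitaries over A such that every entry of U commutes with every entry of V, u_{xy}·u_{x'y'} = 0 whenever rel_X(x,x') ≠ rel_Y(y,y'), and v_{yz}·v_{y'z'} = 0 whenever rel_Y(y,y') ≠ rel_Z(z,z'). Define W = (w_{xz})_{x∈V(X), z∈V(Z)} by w_{xz} = ∑_{y∈V(Y)} u_{xy}·v_{yz}. Then W is a magic unitary over A, and w_{xz}·w_{x'z'} = 0 whenever rel_X(x,x') ≠ rel_Z(z,z'). -/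
/-!
With `w x z = ∑ y, u x y * v y z`, commutation of the entries of `u` with those of `v` expands
`w x z * w x' z'` into `∑ y y', (u x y * u x' y') * (v y z * v y' z')`. If
`rel X x x' ≠ rel Z z z'`, then `rel Y y y'` differs from one of the two for every pair `y, y'`,
so every term vanishes. For `x = x'` and `z = z'` only the terms with `y = y'` survive (as
`rel X x x = 0 ≠ rel Y y y'` otherwise), and they add up to `w x z`.
-/

open scoped Classical in
/-- `rel G v v'` records the relationship of two vertices: `0` if equal, `1` if adjacent,
`2` if distinct and non-adjacent. -/
noncomputable def rel {V : Type*} (G : SimpleGraph V) (v v' : V) : ℕ :=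
  if v = v' then 0 else if G.Adj v v' then 1 else 2

theorem rel_self {V : Type*} (G : SimpleGraph V) (v : V) : rel G v v = 0 := if_pos rfl

theorem rel_ne_zero {V : Type*} (G : SimpleGraph V) {v v' : V} (h : v ≠ v') : rel G v v' ≠ 0 := by
  unfold rel
  split_ifs <;> simp_all

theorem mul_eq_zero_of_ne_of_rel {A V₁ V₂ : Type*} [MulZeroClass A] {X : SimpleGraph V₁}
    {Y : SimpleGraph V₂} {u : V₁ → V₂ → A}
    (hrel : ∀ x x' y y', rel X x x' ≠ rel Y y y' → u x y * u x' y' = 0)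
    (x : V₁) {y y' : V₂} (hy : y ≠ y') : u x y * u x y' = 0 :=
  hrel x x y y' (by rw [rel_self]; exact (rel_ne_zero Y hy).symm)

section Semiring

variable {A ι κ μ : Type*} [Semiring A] [Fintype κ] {u : ι → κ → A} {v : κ → μ → A}

theorem sum_mul_mul_sum_mul_of_commute (hcomm : ∀ x y y' z, Commute (u x y) (v y' z))
    (x x' : ι) (z z' : μ) :
    (∑ y, u x y * v y z) * (∑ y, u x' y * v y z') =
      ∑ y, ∑ y', u x y * u x' y' * (v y z * v y' z') := by
  rw [Finset.sum_mul_sum]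
  exact Finset.sum_congr rfl fun y _ ↦ Finset.sum_congr rfl fun y' _ ↦
    (hcomm x' y' y z).symm.mul_mul_mul_comm _ _

theorem isIdempotentElem_sum_mul (hcomm : ∀ x y y' z, Commute (u x y) (v y' z)) {x : ι} {z : μ}
    (horth : ∀ y y', y ≠ y' → u x y * u x y' = 0) (hu : ∀ y, IsIdempotentElem (u x y))
    (hv : ∀ y, IsIdempotentElem (v y z)) : IsIdempotentElem (∑ y, u x y * v y z) := by
  rw [IsIdempotentElem, sum_mul_mul_sum_mul_of_commute hcomm]
  refine Finset.sum_congr rfl fun y _ ↦ ?_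
  rw [Finset.sum_eq_single y (fun y' _ hne ↦ by rw [horth y y' hne.symm, zero_mul])
    (fun hy ↦ absurd (Finset.mem_univ y) hy), (hu y).eq, (hv y).eq]

theorem sum_mul_mul_sum_mul_eq_zero_of_rel_ne {X : SimpleGraph ι} {Y : SimpleGraph κ}
    {Z : SimpleGraph μ} (hcomm : ∀ x y y' z, Commute (u x y) (v y' z))
    (hurel : ∀ x x' y y', rel X x x' ≠ rel Y y y' → u x y * u x' y' = 0)
    (hvrel : ∀ y y' z z', rel Y y y' ≠ rel Z z z' → v y z * v y' z' = 0)
    {x x' : ι} {z z' : μ} (h : rel X x x' ≠ rel Z z z') :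
    (∑ y, u x y * v y z) * (∑ y, u x' y * v y z') = 0 := by
  rw [sum_mul_mul_sum_mul_of_commute hcomm]
  refine Finset.sum_eq_zero fun y _ ↦ Finset.sum_eq_zero fun y' _ ↦ ?_
  by_cases hXY : rel X x x' = rel Y y y'
  · rw [hvrel y y' z z' (hXY ▸ h), mul_zero]
  · rw [hurel x x' y y' hXY, zero_mul]

theorem sum_sum_mul_eq_one_of_row_sums [Fintype μ] {a : κ → A}
    (ha : ∑ y, a y = 1) (hv : ∀ y, ∑ z, v y z = 1) : ∑ z, ∑ y, a y * v y z = 1 := by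
  rw [Finset.sum_comm]
  simp only [← Finset.mul_sum, hv, mul_one, ha]

theorem sum_sum_mul_eq_one_of_col_sums [Fintype ι] {b : κ → A}
    (hu : ∀ y, ∑ x, u x y = 1) (hb : ∑ y, b y = 1) : ∑ x, ∑ y, u x y * b y = 1 := by
  rw [Finset.sum_comm]
  simp only [← Finset.sum_mul, hu, one_mul, hb]

end Semiring

/-- Quantum isomorphisms compose: if `u` is a magic unitary witnessing a
quantum isomorphism from `X` to `Y`, `v` one from `Y` to `Z`, and all entries of `u`
commute with all entries of `v`, then `w x z := ∑ y, u x y * v y z` is a magic unitary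
witnessing a quantum isomorphism from `X` to `Z`. -/
theorem quantum_isomorphism_composes {A : Type*} [CStarAlgebra A]
    {V₁ V₂ V₃ : Type*} [Fintype V₁] [Fintype V₂] [Fintype V₃]
    (X : SimpleGraph V₁) (Y : SimpleGraph V₂) (Z : SimpleGraph V₃)
    (u : V₁ → V₂ → A) (v : V₂ → V₃ → A)
    (hustar : ∀ x y, star (u x y) = u x y)
    (huidem : ∀ x y, u x y * u x y = u x y)
    (hurow : ∀ x, ∑ y, u x y = 1)
    (hucol : ∀ y, ∑ x, u x y = 1)
    (hvstar : ∀ y z, star (v y z) = v y z)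
    (hvidem : ∀ y z, v y z * v y z = v y z)
    (hvrow : ∀ y, ∑ z, v y z = 1)
    (hvcol : ∀ z, ∑ y, v y z = 1)
    (hcomm : ∀ x y y' z, u x y * v y' z = v y' z * u x y)
    (hurel : ∀ (x x' : V₁) (y y' : V₂), rel X x x' ≠ rel Y y y' → u x y * u x' y' = 0)
    (hvrel : ∀ (y y' : V₂) (z z' : V₃), rel Y y y' ≠ rel Z z z' → v y z * v y' z' = 0) :
    (∀ x z, star (∑ y, u x y * v y z) = ∑ y, u x y * v y z) ∧
    (∀ x z, (∑ y, u x y * v y z) * (∑ y, u x y * v y z) = ∑ y, u x y * v y z) ∧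
    (∀ x, ∑ z, ∑ y, u x y * v y z = 1) ∧
    (∀ z, ∑ x, ∑ y, u x y * v y z = 1) ∧
    (∀ (x x' : V₁) (z z' : V₃), rel X x x' ≠ rel Z z z' →
      (∑ y, u x y * v y z) * (∑ y, u x' y * v y z') = 0) := by
  refine ⟨fun x z ↦ ?_, fun x z ↦ ?_, fun x ↦ ?_, fun z ↦ ?_, fun x x' z z' h ↦ ?_⟩
  · exact isSelfAdjoint_sum _ fun y _ ↦
      (IsSelfAdjoint.commute_iff (hustar x y) (hvstar y z)).mp (hcomm x y y z)
  · exact isIdempotentElem_sum_mul hcomm (fun _ _ ↦ mul_eq_zero_of_ne_of_rel hurel x)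
      (huidem x) (hvidem · z)
  · exact sum_sum_mul_eq_one_of_row_sums (hurow x) hvrow
  · exact sum_sum_mul_eq_one_of_col_sums hucol (hvcol z)
  · exact sum_mul_mul_sum_mul_eq_zero_of_rel_ne hcomm hurel hvrel h
end

section
/- Let X and Y be finite simple graphs on disjoint vertex sets, A a unital C*-algebra, and W = (w_{xy})_{x∈V(X), y∈V(Y)} a magic unitary over A with w_{xy}·w_{x'y'} = 0 whenever rel_X(x,x') ≠ rel_Y(y,y'). Let Z = X ⊔ Y be the disjoint union of X and Y. Define the matrix W̃ = (w̃_{zz'})_{z,z'∈V(Z)} by: w̃_{zz'} = w_{zz'} if z ∈ V(X) and z' ∈ V(Y); w̃_{zz'} = w_{z'z} if z ∈ V(Y) and z' ∈ V(X); and w̃_{zz'} = 0 if z and z' both lie in V(X) or both lie in V(Y). Then W̃ is a magic unitary over A indexed by V(Z), and w̃_{z₁z₁'}·w̃_{z₂z₂'} = 0 whenever rel_Z(z₁,z₂) ≠ rel_Z(z₁',z₂'). -/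
/-- The matrix `W̃` on the disjoint union built from a magic unitary `w` indexed by
`V(X) × V(Y)`: it is `w` between the two parts and `0` within each part. -/
def tildeW {A : Type*} [CStarAlgebra A] {V W : Type*} (w : V → W → A) :
    V ⊕ W → V ⊕ W → A := fun z z' =>
  match z, z' with
  | Sum.inl x, Sum.inr y => w x y
  | Sum.inr y, Sum.inl x => w x y
  | Sum.inl _, Sum.inl _ => 0
  | Sum.inr _, Sum.inr _ => 0

/-!
`W̃` is the symmetric block matrix `[[0, W], [Wᵀ, 0]]`, so its entries are projections and its
row and column sums are those of `W`. In `w̃ z₁ z₁' * w̃ z₂ z₂'` with both factors nonzero, either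
`z₁, z₂` lie in the same part and `z₁', z₂'` in the other, so the condition is that on `W`; or
both pairs straddle the two parts, and then `rel Z` is "distinct, non-adjacent" on both.
-/

lemma SimpleGraph.Embedding.rel_map {V V' : Type*} {G : SimpleGraph V} {G' : SimpleGraph V'}
    (f : G ↪g G') (a b : V) : rel G' (f a) (f b) = rel G a b := by
  rw [rel, rel, f.injective.eq_iff, f.map_adj_iff]

section SumGraph

variable {α β : Type*} (X : SimpleGraph α) (Y : SimpleGraph β)

lemma rel_sum_inl (a b : α) : rel (X ⊕g Y) (.inl a) (.inl b) = rel X a b :=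
  SimpleGraph.Embedding.sumInl.rel_map a b

lemma rel_sum_inr (a b : β) : rel (X ⊕g Y) (.inr a) (.inr b) = rel Y a b :=
  SimpleGraph.Embedding.sumInr.rel_map a b

lemma rel_sum_inl_inr (a : α) (b : β) : rel (X ⊕g Y) (.inl a) (.inr b) = 2 := by
  simp [rel]

lemma rel_sum_inr_inl (a : β) (b : α) : rel (X ⊕g Y) (.inr a) (.inl b) = 2 := by
  simp [rel]

end SumGraph

section TildeW

variable {A : Type*} [CStarAlgebra A] {V W : Type*}

lemma tildeW_comm (w : V → W → A) (z z' : V ⊕ W) : tildeW w z z' = tildeW w z' z := by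
  rcases z with x | y <;> rcases z' with x' | y' <;> rfl

variable {w : V → W → A}

lemma star_tildeW (hstar : ∀ x y, star (w x y) = w x y) (z z' : V ⊕ W) :
    star (tildeW w z z') = tildeW w z z' := by
  rcases z with x | y <;> rcases z' with x' | y' <;> simp [tildeW, hstar]

lemma tildeW_mul_self (hidem : ∀ x y, w x y * w x y = w x y) (z z' : V ⊕ W) :
    tildeW w z z' * tildeW w z z' = tildeW w z z' := by
  rcases z with x | y <;> rcases z' with x' | y' <;> simp [tildeW, hidem]

lemma tildeW_mul_tildeW_eq_zero (X : SimpleGraph V) (Y : SimpleGraph W)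
    (hrel : ∀ (x x' : V) (y y' : W), rel X x x' ≠ rel Y y y' → w x y * w x' y' = 0)
    (z₁ z₁' z₂ z₂' : V ⊕ W) (h : rel (X ⊕g Y) z₁ z₂ ≠ rel (X ⊕g Y) z₁' z₂') :
    tildeW w z₁ z₁' * tildeW w z₂ z₂' = 0 := by
  rcases z₁ with x₁ | y₁ <;> rcases z₁' with x₁' | y₁' <;>
    rcases z₂ with x₂ | y₂ <;> rcases z₂' with x₂' | y₂' <;>
    simp only [tildeW, rel_sum_inl, rel_sum_inr, rel_sum_inl_inr, rel_sum_inr_inl, zero_mul,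
      mul_zero, ne_eq, not_true_eq_false] at h ⊢
  · exact hrel _ _ _ _ h
  · exact hrel _ _ _ _ (Ne.symm h)

variable [Fintype V] [Fintype W]

lemma sum_tildeW_row (hrow : ∀ x, ∑ y, w x y = 1) (hcol : ∀ y, ∑ x, w x y = 1)
    (z : V ⊕ W) : ∑ z', tildeW w z z' = 1 := by
  rcases z with x | y <;> simp [tildeW, Fintype.sum_sum_type, hrow, hcol]

lemma sum_tildeW_col (hrow : ∀ x, ∑ y, w x y = 1) (hcol : ∀ y, ∑ x, w x y = 1)
    (z' : V ⊕ W) : ∑ z, tildeW w z z' = 1 := by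
  simpa only [tildeW_comm w _ z'] using sum_tildeW_row hrow hcol z'

end TildeW

/-- If `w` is a magic unitary witnessing a quantum isomorphism of `X`
and `Y`, then `W̃` is a magic unitary indexed by the disjoint union `Z = X ⊕g Y` and
satisfies `w̃ z₁ z₁' * w̃ z₂ z₂' = 0` whenever `rel Z z₁ z₂ ≠ rel Z z₁' z₂'`. -/
theorem tildeW_is_magic_unitary {A : Type*} [CStarAlgebra A]
    {V W : Type*} [Fintype V] [Fintype W]
    (X : SimpleGraph V) (Y : SimpleGraph W)
    (w : V → W → A)
    (hstar : ∀ x y, star (w x y) = w x y)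
    (hidem : ∀ x y, w x y * w x y = w x y)
    (hrow : ∀ x, ∑ y, w x y = 1)
    (hcol : ∀ y, ∑ x, w x y = 1)
    (hrel : ∀ (x x' : V) (y y' : W), rel X x x' ≠ rel Y y y' → w x y * w x' y' = 0) :
    (∀ z z', star (tildeW w z z') = tildeW w z z') ∧
    (∀ z z', tildeW w z z' * tildeW w z z' = tildeW w z z') ∧
    (∀ z, ∑ z', tildeW w z z' = 1) ∧
    (∀ z', ∑ z, tildeW w z z' = 1) ∧
    (∀ z₁ z₁' z₂ z₂' : V ⊕ W, rel (X ⊕g Y) z₁ z₂ ≠ rel (X ⊕g Y) z₁' z₂' →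
      tildeW w z₁ z₁' * tildeW w z₂ z₂' = 0) :=
  ⟨star_tildeW hstar, tildeW_mul_self hidem, sum_tildeW_row hrow hcol,
    sum_tildeW_col hrow hcol, tildeW_mul_tildeW_eq_zero X Y hrel⟩
end

section
/- Let Z be a finite simple graph and let F be a set of edges of Z such that every vertex of Z is incident to an even number of edges in F (i.e., F is the edge set of an even subgraph of Z). Then the map (ℓ, S) ↦ (ℓ, S △ (E_ℓ ∩ F)) is an automorphism of the graph X_0(Z), where △ denotes symmetric difference of sets. -/
open scoped symmDiff
/-- The graph `X₀(Z)`: vertices are pairs `(ℓ, S)` with `S` an even-cardinality set of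
edges of `Z` incident to `ℓ`; `(ℓ, S)` and `(k, T)` are adjacent iff `ℓ` is adjacent to
`k` in `Z` and the edge `{ℓ, k}` lies in exactly one of `S` and `T`. -/
def X0 {V : Type*} [DecidableEq V] (Z : SimpleGraph V) :
    SimpleGraph {p : V × Finset (Sym2 V) // ↑p.2 ⊆ Z.incidenceSet p.1 ∧ Even p.2.card} where
  Adj p q := Z.Adj p.1.1 q.1.1 ∧ Xor' (s(p.1.1, q.1.1) ∈ p.1.2) (s(p.1.1, q.1.1) ∈ q.1.2)
  symm := by
    refine ⟨?_⟩
    rintro ⟨⟨l, S⟩, _⟩ ⟨⟨k, T⟩, _⟩ ⟨hadj, hx⟩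
    refine ⟨hadj.symm, ?_⟩
    rw [Sym2.eq_swap]
    simp only [Xor'] at hx ⊢
    first
      | exact hx.symm
      | exact Xor.symm hx
      | (rw [xor_comm]; exact hx)
      | (simp only [Xor, xor_iff_or_and_not_and] at hx ⊢; tauto)
  loopless := by
    refine ⟨?_⟩
    rintro ⟨⟨l, S⟩, _⟩ ⟨hadj, _⟩
    exact hadj.ne rfl

/-!
Adjacency of `(ℓ, S)` and `(k, T)` in `X₀(Z)` only sees whether the shared edge `{ℓ, k}` lies
in `S` and in `T`. Switching toggles both memberships by the same bit, namely whether
`{ℓ, k} ∈ F`, so it preserves adjacency; it is an involution, and since `F` meets every `E_ℓ`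
in an even number of edges it keeps `|S|` even.
-/

theorem Finset.card_symmDiff_add_two_mul_card_inter {α : Type*} [DecidableEq α]
    (s t : Finset α) : (s ∆ t).card + 2 * (s ∩ t).card = s.card + t.card := by
  rw [symmDiff_eq_sup_sdiff_inf, Finset.sup_eq_union, Finset.inf_eq_inter,
    Finset.card_sdiff_of_subset Finset.inter_subset_union, ← Finset.card_union_add_card_inter]
  have := Finset.card_le_card (Finset.inter_subset_union (s := s) (t := t))
  omega

theorem Finset.even_card_symmDiff {α : Type*} [DecidableEq α] {s t : Finset α}
    (hs : Even s.card) (ht : Even t.card) : Even (s ∆ t).card := by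
  have := Finset.card_symmDiff_add_two_mul_card_inter s t
  rw [Nat.even_iff] at hs ht ⊢
  omega

section

variable {V : Type*} [Fintype V] [DecidableEq V] {Z : SimpleGraph V} [DecidableRel Z.Adj]
  {F : Finset (Sym2 V)}

namespace SimpleGraph

theorem incidenceFinset_inter_eq_filter (hF : ↑F ⊆ Z.edgeSet) (v : V) :
    Z.incidenceFinset v ∩ F = F.filter (v ∈ ·) := by
  ext e
  simp only [Finset.mem_inter, Finset.mem_filter, mem_incidenceFinset, incidenceSet,
    Set.mem_sep_iff]
  exact ⟨fun ⟨⟨_, hv⟩, he⟩ ↦ ⟨he, hv⟩, fun ⟨he, hv⟩ ↦ ⟨⟨hF he, hv⟩, he⟩⟩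

theorem mk'_mem_incidenceFinset_inter_iff {l k : V} (h : Z.Adj l k) :
    s(l, k) ∈ Z.incidenceFinset l ∩ F ↔ s(l, k) ∈ F := by
  simp [Z.mk'_mem_incidenceSet_left_iff.mpr h]

end SimpleGraph

namespace X0

variable (hF : ∀ v, Even (Z.incidenceFinset v ∩ F).card)

def switch (p : {p : V × Finset (Sym2 V) // ↑p.2 ⊆ Z.incidenceSet p.1 ∧ Even p.2.card}) :
    {p : V × Finset (Sym2 V) // ↑p.2 ⊆ Z.incidenceSet p.1 ∧ Even p.2.card} :=
  ⟨(p.1.1, p.1.2 ∆ (Z.incidenceFinset p.1.1 ∩ F)), by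
    refine ⟨?_, Finset.even_card_symmDiff p.2.2 (hF _)⟩
    rw [Finset.coe_symmDiff]
    refine Set.symmDiff_subset_union.trans (Set.union_subset p.2.1 ?_)
    simp [Set.inter_subset_left]⟩

theorem switch_involutive : Function.Involutive (switch hF) :=
  fun _ ↦ Subtype.ext <| Prod.ext rfl (symmDiff_symmDiff_cancel_right _ _)

theorem adj_switch_iff {p q} : (X0 Z).Adj (switch hF p) (switch hF q) ↔ (X0 Z).Adj p q := by
  obtain ⟨⟨l, S⟩, -⟩ := p
  obtain ⟨⟨k, T⟩, -⟩ := q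
  change Z.Adj l k ∧ Xor (s(l, k) ∈ S ∆ (Z.incidenceFinset l ∩ F))
      (s(l, k) ∈ T ∆ (Z.incidenceFinset k ∩ F)) ↔ Z.Adj l k ∧ Xor (s(l, k) ∈ S) (s(l, k) ∈ T)
  refine and_congr_right fun h ↦ ?_
  have hk := SimpleGraph.mk'_mem_incidenceFinset_inter_iff (F := F) h.symm
  rw [Sym2.eq_swap] at hk
  simp only [Finset.mem_symmDiff, SimpleGraph.mk'_mem_incidenceFinset_inter_iff h, hk, xor_def]
  tauto

def switchIso : X0 Z ≃g X0 Z where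
  toEquiv := (switch_involutive hF).toPerm
  map_rel_iff' := adj_switch_iff hF

end X0

end

/-- If `F` is the edge set of an even subgraph of `Z` (every vertex is
incident to an even number of edges of `F`), then `(ℓ, S) ↦ (ℓ, S ∆ (E_ℓ ∩ F))` is an
automorphism of `X₀(Z)`. -/
theorem X0_automorphism_of_even_subgraph {V : Type*} [Fintype V] [DecidableEq V]
    (Z : SimpleGraph V) [DecidableRel Z.Adj]
    (F : Finset (Sym2 V)) (hF : ↑F ⊆ Z.edgeSet)
    (heven : ∀ v : V, Even (F.filter (fun e => v ∈ e)).card) :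
    ∃ φ : X0 Z ≃g X0 Z,
      ∀ p : {p : V × Finset (Sym2 V) // ↑p.2 ⊆ Z.incidenceSet p.1 ∧ Even p.2.card},
        (φ p).val = (p.val.1, p.val.2 ∆ (Z.incidenceFinset p.val.1 ∩ F)) := by
  have hFeven : ∀ v, Even (Z.incidenceFinset v ∩ F).card := fun v ↦ by
    rw [SimpleGraph.incidenceFinset_inter_eq_filter hF]
    exact heven v
  exact ⟨X0.switchIso hFeven, fun _ ↦ rfl⟩
end
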